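/- arXiv:1210.5746 — 4 statements merged into one kernel-verified Lean document; each statement's English description precedes it below -/
import Mathlib

section
/- Let N ≥ 2 and r > 0. Suppose (q(t), p(t)) solves the Vicsek-type system dq_i/dt = p_i, dp_i/dt = (Σ_{j=1}^N U(q_i − q_j)(p_j − p_i)) / (Σ_{j=1}^N U(q_i − q_j)) for i = 1,…,N. If p_i(0) ∈ B_r (the closed ball of radius r in ℝ^d) for every i = 1,…,N, then p_i(t) ∈ B_r for all t > 0 and all i = 1,…,N. This holds for any positive smooth interaction U, regardless of its support. -/
open scoped BigOperators

/-- For the noiseless `d`-dimensional Vicsek-type system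
`dq_i/dt = p_i`, `dp_i/dt = (∑_j U(q_i − q_j)(p_j − p_i)) / (∑_j U(q_i − q_j))`,
if all initial velocities lie in the closed ball `B_r` of radius `r`, then they stay in `B_r`
for all positive times.  This holds for any positive smooth interaction `U`, regardless of
its support. -/
theorem velocities_remain_in_ball
    (d N : ℕ) (hN : 2 ≤ N) (r : ℝ) (hr : 0 < r)
    (U : EuclideanSpace ℝ (Fin d) → ℝ)
    (hUsmooth : ContDiff ℝ (⊤ : ℕ∞) U)
    (hUsymm : ∀ x, U (-x) = U x)
    (hUnonneg : ∀ x, 0 ≤ U x) (hU0 : 0 < U 0)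
    (q p : ℝ → Fin N → EuclideanSpace ℝ (Fin d))
    (hq : ∀ (i : Fin N) (t : ℝ), HasDerivAt (fun s => q s i) (p t i) t)
    (hp : ∀ (i : Fin N) (t : ℝ), HasDerivAt (fun s => p s i)
      ((∑ j, U (q t i - q t j))⁻¹ •
        ∑ j, U (q t i - q t j) • (p t j - p t i)) t)
    (h0 : ∀ i, p 0 i ∈ Metric.closedBall (0 : EuclideanSpace ℝ (Fin d)) r) :
    ∀ t > (0 : ℝ), ∀ i, p t i ∈ Metric.closedBall (0 : EuclideanSpace ℝ (Fin d)) r := by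
  have hNpos : 0 < N := by omega
  -- sum of interaction weights is positive
  have hSpos : ∀ (s : ℝ) (i : Fin N), 0 < ∑ j, U (q s i - q s j) := by
    intro s i
    apply Finset.sum_pos' (fun j _ => hUnonneg _) ⟨i, Finset.mem_univ i, ?_⟩
    simpa using hU0
  -- rescaled velocities
  set F : ℝ → Fin N → EuclideanSpace ℝ (Fin d) :=
    fun s i => Real.exp s • p s i with hF
  set G : ℝ → Fin N → EuclideanSpace ℝ (Fin d) :=
    fun s i => (∑ j, U (q s i - q s j))⁻¹ • ∑ j, U (q s i - q s j) • F s j with hG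
  have hderiv : ∀ s : ℝ, HasDerivAt F (G s) s := by
    intro s
    rw [hasDerivAt_pi]
    intro i
    have h1 : HasDerivAt (fun x : ℝ => Real.exp x • p x i)
        (Real.exp s •
          ((∑ j, U (q s i - q s j))⁻¹ • ∑ j, U (q s i - q s j) • (p s j - p s i)) +
          Real.exp s • p s i) s :=
      (Real.hasDerivAt_exp s).smul (hp i s)
    convert h1 using 1
    case e'_4 => rfl
    case e'_5 => rfl
    case e'_6 => rfl
    rw [add_comm]
    have hS := hSpos s i
    have key : p s i + (∑ j, U (q s i - q s j))⁻¹ • ∑ j, U (q s i - q s j) • (p s j - p s i)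
        = (∑ j, U (q s i - q s j))⁻¹ • ∑ j, U (q s i - q s j) • p s j := by
      have : (∑ j, U (q s i - q s j) • (p s j - p s i))
          = (∑ j, U (q s i - q s j) • p s j) - (∑ j, U (q s i - q s j)) • p s i := by
        rw [Finset.sum_smul]
        rw [← Finset.sum_sub_distrib]
        congr 1
        ext j
        rw [smul_sub]
      rw [this, smul_sub, inv_smul_smul₀ hS.ne']
      abel
    rw [← smul_add, key]
    simp only [hG, hF]
    simp only [Finset.smul_sum, smul_smul]
    refine Finset.sum_congr rfl fun j _ => ?_
    congr 1
    ring
  have hbound : ∀ s : ℝ, ‖G s‖ ≤ 1 * ‖F s‖ + 0 := by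
    intro s
    rw [one_mul, add_zero]
    rw [pi_norm_le_iff_of_nonneg (norm_nonneg _)]
    intro i
    have hS := hSpos s i
    calc ‖G s i‖ = (∑ j, U (q s i - q s j))⁻¹ * ‖∑ j, U (q s i - q s j) • F s j‖ := by
          simp only [hG]
          rw [norm_smul, Real.norm_eq_abs, abs_of_pos (inv_pos.2 hS)]
      _ ≤ (∑ j, U (q s i - q s j))⁻¹ * ∑ j, U (q s i - q s j) * ‖F s‖ := by
          apply mul_le_mul_of_nonneg_left _ (inv_pos.2 hS).le
          refine (norm_sum_le _ _).trans ?_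
          apply Finset.sum_le_sum
          intro j _
          rw [norm_smul, Real.norm_eq_abs, abs_of_nonneg (hUnonneg _)]
          exact mul_le_mul_of_nonneg_left (norm_le_pi_norm (F s) j) (hUnonneg _)
      _ = ‖F s‖ := by
          rw [← Finset.sum_mul, ← mul_assoc, inv_mul_cancel₀ hS.ne', one_mul]
  have hF0 : ‖F 0‖ ≤ r := by
    rw [pi_norm_le_iff_of_nonneg hr.le]
    intro i
    simp only [hF, Real.exp_zero, one_smul]
    have := h0 i
    rwa [Metric.mem_closedBall, dist_zero_right] at this
  intro t ht i
  have hg := norm_le_gronwallBound_of_norm_deriv_right_le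
    (f := F) (f' := G) (δ := r) (K := 1) (ε := 0) (a := 0) (b := t)
    (fun s _ => (hderiv s).continuousAt.continuousWithinAt)
    (fun s _ => (hderiv s).hasDerivWithinAt) hF0 (fun s _ => hbound s)
    t ⟨ht.le, le_rfl⟩
  rw [sub_zero, gronwallBound_ε0, one_mul] at hg
  have hFi : ‖F t i‖ ≤ r * Real.exp t := (norm_le_pi_norm (F t) i).trans hg
  have : Real.exp t * ‖p t i‖ ≤ r * Real.exp t := by
    simpa [hF, norm_smul, Real.norm_eq_abs, abs_of_pos (Real.exp_pos t)] using hFi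
  rw [Metric.mem_closedBall, dist_zero_right]
  have hexp := Real.exp_pos t
  nlinarith [norm_nonneg (p t i)]
end

section
/- The linear manifold I = {(q, p) ∈ ℝ^{Nd} × ℝ^{Nd} : p_1 = ⋯ = p_N} is stable for the Vicsek-type evolution: for every ε > 0 there exists δ(ε) ≤ ε such that for every initial datum w⁰ ∈ ℝ^{2Nd} with dist(w⁰, I) ≤ δ(ε), the solution satisfies dist(w(t, w⁰), I) ≤ ε for all t ≥ 0. -/
open scoped BigOperators
open Filter Set
open scoped Topology

/-- If finitely many differentiable functions satisfy `f i' t ≤ (sup_j f j t) - f i t`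
for `t ≥ 0`, then the sup is non-increasing on `[0, ∞)`. -/
lemma sup_nonincreasing {n : ℕ} (H : (Finset.univ : Finset (Fin n)).Nonempty)
    (f f' : Fin n → ℝ → ℝ)
    (hderiv : ∀ i t, HasDerivAt (f i) (f' i t) t)
    (hbound : ∀ i t, 0 ≤ t → f' i t ≤ Finset.univ.sup' H (fun j => f j t) - f i t) :
    ∀ t, 0 ≤ t → ∀ i, f i t ≤ Finset.univ.sup' H (fun j => f j 0) := by
  intro t ht i
  set M : ℝ → ℝ := fun s => Finset.univ.sup' H (fun j => f j s) with hM
  have hfle : f i t ≤ M t := Finset.le_sup' (fun j => f j t) (Finset.mem_univ i)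
  refine hfle.trans ?_
  have hMcont : Continuous M := by
    apply continuous_iff_continuousAt.2
    intro x
    exact ContinuousAt.finset_sup'_apply H (fun j _ => (hderiv j x).continuousAt)
  -- suffices: for all ε > 0, M t ≤ M 0 + ε * (1 + t)
  have key : ∀ ε > (0:ℝ), M t ≤ M 0 + ε * (1 + t) := by
    intro ε hε
    have main : ∀ ⦃x⦄, x ∈ Icc 0 t → M x ≤ M 0 + ε * (1 + x) := by
      apply image_le_of_liminf_slope_right_lt_deriv_boundary (f' := fun _ => (0:ℝ))
        (B := fun s => M 0 + ε * (1 + s)) (B' := fun _ => ε)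
      · exact hMcont.continuousOn
      · -- liminf slope of M ≤ 0 at each x ∈ [0, t)
        intro x hx r hr
        set A : Finset (Fin n) := Finset.univ.filter (fun j => f j x = M x) with hA
        obtain ⟨j₀, _, hj₀⟩ := Finset.exists_mem_eq_sup' H (fun j => f j x)
        have hj₀A : j₀ ∈ A := Finset.mem_filter.2 ⟨Finset.mem_univ j₀, hj₀.symm⟩
        have hslope : ∀ j ∈ A, ∀ᶠ z in 𝓝[>] x, slope (f j) x z < r := by
          intro j hj
          have h1 : f' j x ≤ (Finset.univ.sup' H fun k => f k x) - f j x := hbound j x hx.1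
          have h2 : f j x = M x := (Finset.mem_filter.1 hj).2
          have hfj : f' j x < r := by
            have : M x = Finset.univ.sup' H fun k => f k x := rfl
            rw [this] at h2; linarith
          have htend : Filter.Tendsto (slope (f j) x) (𝓝[>] x) (𝓝 (f' j x)) :=
            (hasDerivAt_iff_tendsto_slope.1 (hderiv j x)).mono_left
              (nhdsWithin_mono x (fun z (hz : z ∈ Ioi x) => ne_of_gt hz))
          exact htend.eventually_lt_const hfj
        have hnotA : ∀ j, j ∉ A → ∀ᶠ z in 𝓝[>] x, f j z < f j₀ z := by
          intro j hj
          have hlt : f j x < f j₀ x := by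
            have hle : f j x ≤ M x := Finset.le_sup' (fun k => f k x) (Finset.mem_univ j)
            have hne : f j x ≠ M x := fun h => hj (Finset.mem_filter.2 ⟨Finset.mem_univ j, h⟩)
            have : M x = f j₀ x := hj₀
            rw [← this]; exact lt_of_le_of_ne hle hne
          have : ∀ᶠ z in 𝓝 x, f j z < f j₀ z :=
            ContinuousAt.eventually_lt (hderiv j x).continuousAt (hderiv j₀ x).continuousAt hlt
          exact this.filter_mono nhdsWithin_le_nhds
        have hall : ∀ᶠ z in 𝓝[>] x,
            (∀ j ∈ A, slope (f j) x z < r) ∧ ∀ j ∉ A, f j z < f j₀ z := by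
          refine Filter.Eventually.and ?_ ?_
          · exact (Filter.eventually_all_finset A).2 hslope
          · rw [Filter.eventually_all]
            intro j
            by_cases hjA : j ∈ A
            · simp [hjA]
            · exact (hnotA j hjA).mono fun z hz _ => hz
        refine hall.frequently.mono ?_
        intro z hz
        obtain ⟨j, _, hjz⟩ := Finset.exists_mem_eq_sup' H (fun k => f k z)
        have hjA : j ∈ A := by
          by_contra hjn
          have h1 : f j z < f j₀ z := hz.2 j hjn
          have h2 : f j₀ z ≤ M z := Finset.le_sup' (fun k => f k z) (Finset.mem_univ j₀)
          have h3 : M z = f j z := hjz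
          linarith
        have hfx : f j x = M x := (Finset.mem_filter.1 hjA).2
        have : slope M x z = slope (f j) x z := by
          rw [slope_def_field, slope_def_field]
          have h3 : M z = f j z := hjz
          rw [h3, hfx]
        rw [this]
        exact hz.1 j hjA
      · simp only [mul_zero, add_zero]
        nlinarith
      · intro x
        have h := (((hasDerivAt_id x).const_add (1:ℝ)).const_mul ε).const_add (M 0)
        simpa using h
      · intro x _ _
        exact hε
    have := main (right_mem_Icc.2 ht)
    linarith
  -- conclude M t ≤ M 0
  refine le_of_forall_pos_le_add ?_
  intro ε hε
  have h1t : (0:ℝ) < 1 + t := by linarith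
  have h := key (ε / (1 + t)) (div_pos hε h1t)
  have h2 : ε / (1 + t) * (1 + t) = ε := div_mul_cancel₀ ε (ne_of_gt h1t)
  calc M t ≤ M 0 + ε / (1 + t) * (1 + t) := h
    _ = (Finset.univ.sup' H fun j => f j 0) + ε := by rw [h2]

/-- The Euclidean distance in `ℝ^{2Nd}` from `w = (q, p)` to the invariant linear manifold
`I = {(q', p') : p'_1 = ⋯ = p'_N}`, defined as the infimum of `|w − w'|` over `w' ∈ I`. -/
noncomputable def distToInvariantManifold (d N : ℕ)
    (q p : Fin N → EuclideanSpace ℝ (Fin d)) : ℝ :=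
  sInf { r : ℝ | ∃ (q' : Fin N → EuclideanSpace ℝ (Fin d)) (v : EuclideanSpace ℝ (Fin d)),
    r = Real.sqrt ((∑ i, ‖q i - q' i‖ ^ 2) + ∑ i, ‖p i - v‖ ^ 2) }


lemma distSet_nonempty (d N : ℕ) (q p : Fin N → EuclideanSpace ℝ (Fin d)) :
    { r : ℝ | ∃ (q' : Fin N → EuclideanSpace ℝ (Fin d)) (v : EuclideanSpace ℝ (Fin d)),
      r = Real.sqrt ((∑ i, ‖q i - q' i‖ ^ 2) + ∑ i, ‖p i - v‖ ^ 2) }.Nonempty :=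
  ⟨_, q, 0, rfl⟩

lemma distSet_bddBelow (d N : ℕ) (q p : Fin N → EuclideanSpace ℝ (Fin d)) :
    BddBelow { r : ℝ | ∃ (q' : Fin N → EuclideanSpace ℝ (Fin d)) (v : EuclideanSpace ℝ (Fin d)),
      r = Real.sqrt ((∑ i, ‖q i - q' i‖ ^ 2) + ∑ i, ‖p i - v‖ ^ 2) } := by
  refine ⟨0, ?_⟩
  rintro r ⟨q', v, rfl⟩
  exact Real.sqrt_nonneg _

lemma dist_le_aux (d N : ℕ) (q p : Fin N → EuclideanSpace ℝ (Fin d))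
    (v : EuclideanSpace ℝ (Fin d)) :
    distToInvariantManifold d N q p ≤ Real.sqrt (∑ i, ‖p i - v‖ ^ 2) := by
  apply csInf_le (distSet_bddBelow d N q p)
  exact ⟨q, v, by simp⟩

lemma dist_ge_aux (d N : ℕ) (q p : Fin N → EuclideanSpace ℝ (Fin d)) (i j : Fin N) :
    ‖p i - p j‖ / 2 ≤ distToInvariantManifold d N q p := by
  apply le_csInf (distSet_nonempty d N q p)
  rintro r ⟨q', v, rfl⟩
  have hA : (0:ℝ) ≤ ∑ k, ‖q k - q' k‖ ^ 2 := Finset.sum_nonneg fun k _ => by positivity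
  have hterm : ∀ k : Fin N, ‖p k - v‖ ≤
      Real.sqrt ((∑ i, ‖q i - q' i‖ ^ 2) + ∑ i, ‖p i - v‖ ^ 2) := by
    intro k
    rw [show ‖p k - v‖ = Real.sqrt (‖p k - v‖ ^ 2) by
      rw [Real.sqrt_sq (norm_nonneg _)]]
    apply Real.sqrt_le_sqrt
    have : ‖p k - v‖ ^ 2 ≤ ∑ i, ‖p i - v‖ ^ 2 :=
      Finset.single_le_sum (f := fun i => ‖p i - v‖ ^ 2) (fun i _ => by positivity)
        (Finset.mem_univ k)
    linarith
  have hij : ‖p i - p j‖ ≤ ‖p i - v‖ + ‖p j - v‖ := by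
    have : p i - p j = (p i - v) - (p j - v) := by abel
    rw [this]
    exact norm_sub_le _ _
  have h1 := hterm i
  have h2 := hterm j
  rw [div_le_iff₀ (by norm_num : (0:ℝ) < 2)]
  linarith

/-- The manifold `I = {(q,p) : p_1 = ⋯ = p_N}` is stable for the
Vicsek-type evolution: for every `ε > 0` there is `δ(ε) ≤ ε`, `δ > 0`, such that every
solution starting at distance at most `δ` from `I` stays at distance at most `ε` from `I`
for all `t ≥ 0`. -/
theorem invariant_manifold_stable
    (d N : ℕ) (hN : 2 ≤ N)
    (U : EuclideanSpace ℝ (Fin d) → ℝ)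
    (hUsmooth : ContDiff ℝ (⊤ : ℕ∞) U)
    (hUsymm : ∀ x, U (-x) = U x)
    (hUnonneg : ∀ x, 0 ≤ U x) (hU0 : 0 < U 0) :
    ∀ ε > (0 : ℝ), ∃ δ > (0 : ℝ), δ ≤ ε ∧
      ∀ (q p : ℝ → Fin N → EuclideanSpace ℝ (Fin d)),
        (∀ (i : Fin N) (t : ℝ), HasDerivAt (fun s => q s i) (p t i) t) →
        (∀ (i : Fin N) (t : ℝ), HasDerivAt (fun s => p s i)
          ((∑ j, U (q t i - q t j))⁻¹ •
            ∑ j, U (q t i - q t j) • (p t j - p t i)) t) →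
        distToInvariantManifold d N (q 0) (p 0) ≤ δ →
        ∀ t ≥ (0 : ℝ), distToInvariantManifold d N (q t) (p t) ≤ ε := by
  intro ε hε
  have hN1 : (1:ℝ) ≤ (N:ℝ) := by exact_mod_cast Nat.one_le_of_lt hN
  have hsN : (1:ℝ) ≤ Real.sqrt N := by
    rw [show (1:ℝ) = Real.sqrt 1 by simp]
    exact Real.sqrt_le_sqrt hN1
  have hsNpos : (0:ℝ) < Real.sqrt N := lt_of_lt_of_le one_pos hsN
  refine ⟨ε / (2 * Real.sqrt N), by positivity, ?_, ?_⟩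
  · apply div_le_self hε.le; linarith
  intro q p hq hp hinit t ht
  haveI : Nonempty (Fin N) := ⟨⟨0, by omega⟩⟩
  have H : (Finset.univ : Finset (Fin N)).Nonempty := Finset.univ_nonempty
  set δ : ℝ := ε / (2 * Real.sqrt N) with hδdef
  have hδpos : 0 < δ := by positivity
  set i₀ : Fin N := ⟨0, by omega⟩ with hi₀
  set c : EuclideanSpace ℝ (Fin d) := p 0 i₀ with hc
  set f : Fin N → ℝ → ℝ := fun i s => ‖p s i - c‖ ^ 2 with hfdef
  set f' : Fin N → ℝ → ℝ := fun i s =>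
    2 * (inner ℝ (p s i - c) ((∑ j, U (q s i - q s j))⁻¹ •
       ∑ j, U (q s i - q s j) • (p s j - p s i)) : ℝ) with hf'def
  -- derivative of f i
  have hderiv : ∀ i s, HasDerivAt (f i) (f' i s) s := by
    intro i s
    have hg : HasDerivAt (fun s' => p s' i - c) ((∑ j, U (q s i - q s j))⁻¹ •
       ∑ j, U (q s i - q s j) • (p s j - p s i)) s := (hp i s).sub_const c
    have h2 := HasDerivAt.inner ℝ hg hg
    have heq : (fun s' => (inner ℝ (p s' i - c) (p s' i - c) : ℝ)) = f i := by
      funext s'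
      show (inner ℝ (p s' i - c) (p s' i - c) : ℝ) = ‖p s' i - c‖ ^ 2
      exact real_inner_self_eq_norm_sq _
    rw [heq] at h2
    have hcomm : (inner ℝ ((∑ j, U (q s i - q s j))⁻¹ •
        ∑ j, U (q s i - q s j) • (p s j - p s i)) (p s i - c) : ℝ)
        = (inner ℝ (p s i - c) ((∑ j, U (q s i - q s j))⁻¹ •
        ∑ j, U (q s i - q s j) • (p s j - p s i)) : ℝ) := real_inner_comm _ _
    rw [hcomm] at h2
    have h3 : f' i s = (inner ℝ (p s i - c) ((∑ j, U (q s i - q s j))⁻¹ •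
        ∑ j, U (q s i - q s j) • (p s j - p s i)) : ℝ) +
        (inner ℝ (p s i - c) ((∑ j, U (q s i - q s j))⁻¹ •
        ∑ j, U (q s i - q s j) • (p s j - p s i)) : ℝ) := two_mul _
    rw [h3]
    exact h2
  -- positivity of the weights sum
  have hS : ∀ i s, (0:ℝ) < ∑ j, U (q s i - q s j) := by
    intro i s
    have h1 : U (q s i - q s i) ≤ ∑ j, U (q s i - q s j) :=
      Finset.single_le_sum (f := fun j => U (q s i - q s j))
        (fun j _ => hUnonneg _) (Finset.mem_univ i)
    rw [sub_self] at h1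
    exact lt_of_lt_of_le hU0 h1
  -- the key differential inequality
  have hbound : ∀ i s, 0 ≤ s →
      f' i s ≤ Finset.univ.sup' H (fun j => f j s) - f i s := by
    intro i s _
    set M : ℝ := Finset.univ.sup' H (fun j => f j s) with hM
    set S : ℝ := ∑ j, U (q s i - q s j) with hSdef
    have hSpos : 0 < S := hS i s
    have hinner : (inner ℝ (p s i - c) (S⁻¹ • ∑ j, U (q s i - q s j) • (p s j - p s i)) : ℝ)
        = S⁻¹ * ∑ j, U (q s i - q s j) * (inner ℝ (p s i - c) (p s j - p s i) : ℝ) := by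
      rw [real_inner_smul_right, inner_sum]
      congr 1
      apply Finset.sum_congr rfl
      intro j _
      rw [real_inner_smul_right]
    have hterm : ∀ j : Fin N, (inner ℝ (p s i - c) (p s j - p s i) : ℝ) ≤ (M - f i s) / 2 := by
      intro j
      have hsplit : p s j - p s i = (p s j - c) - (p s i - c) := by abel
      rw [hsplit, inner_sub_right]
      have h1 : (inner ℝ (p s i - c) (p s j - c) : ℝ) ≤ ‖p s i - c‖ * ‖p s j - c‖ :=
        real_inner_le_norm _ _
      have h2 : ‖p s i - c‖ * ‖p s j - c‖ ≤ (‖p s i - c‖^2 + ‖p s j - c‖^2) / 2 := by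
        nlinarith [sq_nonneg (‖p s i - c‖ - ‖p s j - c‖)]
      have h3 : (inner ℝ (p s i - c) (p s i - c) : ℝ) = ‖p s i - c‖^2 :=
        real_inner_self_eq_norm_sq _
      have h4 : ‖p s j - c‖^2 ≤ M := Finset.le_sup' (fun k => f k s) (Finset.mem_univ j)
      have h5 : f i s = ‖p s i - c‖^2 := rfl
      rw [h3]
      linarith
    have hsum : ∑ j, U (q s i - q s j) * (inner ℝ (p s i - c) (p s j - p s i) : ℝ)
        ≤ S * ((M - f i s) / 2) := by
      rw [hSdef, Finset.sum_mul]
      apply Finset.sum_le_sum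
      intro j _
      exact mul_le_mul_of_nonneg_left (hterm j) (hUnonneg _)
    have hfin : (inner ℝ (p s i - c) (S⁻¹ • ∑ j, U (q s i - q s j) • (p s j - p s i)) : ℝ)
        ≤ (M - f i s) / 2 := by
      rw [hinner]
      calc S⁻¹ * ∑ j, U (q s i - q s j) * (inner ℝ (p s i - c) (p s j - p s i) : ℝ)
          ≤ S⁻¹ * (S * ((M - f i s) / 2)) :=
            mul_le_mul_of_nonneg_left hsum (inv_nonneg.2 hSpos.le)
        _ = (M - f i s) / 2 := by field_simp
    have : f' i s = 2 * (inner ℝ (p s i - c)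
        (S⁻¹ • ∑ j, U (q s i - q s j) • (p s j - p s i)) : ℝ) := rfl
    rw [this]
    linarith
  -- apply the monotonicity lemma
  have hmono := sup_nonincreasing H f f' hderiv hbound t ht
  -- initial bound: f j 0 ≤ (2δ)^2
  have hM0 : ∀ j : Fin N, f j 0 ≤ (2*δ)^2 := by
    intro j
    have h1 : ‖p 0 j - p 0 i₀‖ / 2 ≤ distToInvariantManifold d N (q 0) (p 0) :=
      dist_ge_aux d N (q 0) (p 0) j i₀
    have h2 : ‖p 0 j - c‖ ≤ 2 * δ := by
      rw [hc]
      have := le_trans h1 hinit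
      linarith
    have h3 : (0:ℝ) ≤ ‖p 0 j - c‖ := norm_nonneg _
    calc f j 0 = ‖p 0 j - c‖^2 := rfl
      _ ≤ (2*δ)^2 := by nlinarith
  -- conclude
  have hfinal : ∀ i : Fin N, f i t ≤ (2*δ)^2 := by
    intro i
    refine (hmono i).trans ?_
    apply Finset.sup'_le
    intro j _
    exact hM0 j
  calc distToInvariantManifold d N (q t) (p t)
      ≤ Real.sqrt (∑ i, ‖p t i - c‖ ^ 2) := dist_le_aux d N (q t) (p t) c
    _ ≤ Real.sqrt ((N:ℝ) * (2*δ)^2) := by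
        apply Real.sqrt_le_sqrt
        calc ∑ i, ‖p t i - c‖ ^ 2 = ∑ i : Fin N, f i t := rfl
          _ ≤ ∑ _i : Fin N, (2*δ)^2 := Finset.sum_le_sum fun i _ => hfinal i
          _ = (N:ℝ) * (2*δ)^2 := by simp [Finset.sum_const, mul_comm]
    _ = Real.sqrt N * (2*δ) := by
        rw [Real.sqrt_mul (by positivity) ((2*δ)^2), Real.sqrt_sq (by positivity)]
    _ = ε := by
        rw [hδdef]
        field_simp
end

section
/- Let q ∈ ℝ^{Nd} be such that Ã(q) is irreducible and let C(q) ∈ L(ℝ^{2Nd}) be the block matrix [[0, I_{Nd}],[0, A(q) − I_{Nd}]] with A(q) = Ã(q) ⊗ I_d. Then 0 is an eigenvalue of C(q); the (N+1)d-dimensional manifold I = {(q',p) ∈ ℝ^{Nd} × ℝ^{Nd} : p_1 = ⋯ = p_N} is exactly the eigenspace associated to the eigenvalue 0 (equal to the kernel of C(q)²), and all other eigenvalues of C(q) have strictly negative real part. -/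
open scoped BigOperators Kronecker

/-- The stochastic interaction matrix `Ã(q)` with entries
`a_{ij}(q) = U(q_i − q_j) / ∑_k U(q_i − q_k)`. -/
noncomputable def vicsekMatrix (d N : ℕ) (U : EuclideanSpace ℝ (Fin d) → ℝ)
    (q : Fin N → EuclideanSpace ℝ (Fin d)) : Matrix (Fin N) (Fin N) ℝ :=
  fun i j => U (q i - q j) / ∑ k, U (q i - q k)

/-- A nonnegative matrix is irreducible if some power of it has strictly positive entries. -/
def MatrixIrreducible {N : ℕ} (A : Matrix (Fin N) (Fin N) ℝ) : Prop :=
  ∃ m : ℕ, ∀ i j, 0 < (A ^ m) i j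

/-- The block matrix `A(q) = Ã(q) ⊗ I_d` (complexified). -/
noncomputable def vicsekBlockMatrix (d N : ℕ) (U : EuclideanSpace ℝ (Fin d) → ℝ)
    (q : Fin N → EuclideanSpace ℝ (Fin d)) :
    Matrix (Fin N × Fin d) (Fin N × Fin d) ℂ :=
  ((vicsekMatrix d N U q).map (Complex.ofReal)) ⊗ₖ (1 : Matrix (Fin d) (Fin d) ℂ)

/-- The linearization matrix `C(q) = [[0, I_{Nd}], [0, A(q) − I_{Nd}]]` of the Vicsek-type
system, acting on `ℝ^{2Nd} = ℝ^{Nd} ⊕ ℝ^{Nd}` (complexified). -/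
noncomputable def vicsekCMatrix (d N : ℕ) (U : EuclideanSpace ℝ (Fin d) → ℝ)
    (q : Fin N → EuclideanSpace ℝ (Fin d)) :
    Matrix ((Fin N × Fin d) ⊕ (Fin N × Fin d)) ((Fin N × Fin d) ⊕ (Fin N × Fin d)) ℂ :=
  Matrix.fromBlocks 0 1 0 (vicsekBlockMatrix d N U q - 1)

open scoped BigOperators Kronecker
open Matrix Finset

lemma kronOne_mulVec {N d : ℕ} (X : Matrix (Fin N) (Fin N) ℂ) (w : Fin N × Fin d → ℂ)
    (i : Fin N) (a : Fin d) :
    ((X ⊗ₖ (1 : Matrix (Fin d) (Fin d) ℂ)) *ᵥ w) (i, a) = ∑ j, X i j * w (j, a) := by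
  simp only [Matrix.mulVec, dotProduct, Fintype.sum_prod_type,
    Matrix.kroneckerMap_apply, Matrix.one_apply, mul_ite, mul_one, mul_zero, ite_mul, zero_mul]
  simp

lemma perron_const {N : ℕ} (M : Matrix (Fin N) (Fin N) ℝ)
    (hrow : ∀ i, ∑ j, M i j = 1)
    (m : ℕ) (hm : ∀ i j, 0 < (M ^ m) i j)
    (u : Fin N → ℝ) (hu : M *ᵥ u = u) (i j : Fin N) : u i = u j := by
  have hu' : ∀ n, (M ^ n) *ᵥ u = u := by
    intro n
    induction n with
    | zero => simp
    | succ k ih => rw [pow_succ, ← Matrix.mulVec_mulVec, hu, ih]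
  have hrow' : ∀ n i, ∑ j, (M ^ n) i j = 1 := by
    intro n
    induction n with
    | zero => intro i; simp [Matrix.one_apply]
    | succ k ih =>
      intro i
      rw [pow_succ]
      simp only [Matrix.mul_apply]
      rw [Finset.sum_comm]
      calc ∑ l, ∑ j, (M ^ k) i l * M l j = ∑ l, (M ^ k) i l * ∑ j, M l j := by
            simp [Finset.mul_sum]
        _ = 1 := by simp [hrow, ih]
  obtain ⟨i₀, -, hmax⟩ := Finset.exists_max_image Finset.univ u ⟨i, Finset.mem_univ i⟩
  have key : ∀ k, u k = u i₀ := by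
    intro k
    by_contra hk
    have hk' : u k < u i₀ := lt_of_le_of_ne (hmax k (Finset.mem_univ k)) hk
    have hlt : ∑ l, (M ^ m) i₀ l * u l < ∑ l, (M ^ m) i₀ l * u i₀ := by
      refine Finset.sum_lt_sum (fun l _ => ?_) ⟨k, Finset.mem_univ k, ?_⟩
      · exact mul_le_mul_of_nonneg_left (hmax l (Finset.mem_univ l)) (hm i₀ l).le
      · exact mul_lt_mul_of_pos_left hk' (hm i₀ k)
    have h1 : ∑ l, (M ^ m) i₀ l * u l = u i₀ := by
      have := congrFun (hu' m) i₀
      simpa [Matrix.mulVec, dotProduct] using this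
    have h2 : ∑ l, (M ^ m) i₀ l * u i₀ = u i₀ := by
      rw [← Finset.sum_mul, hrow' m, one_mul]
    rw [h1, h2] at hlt
    exact lt_irrefl _ hlt
  rw [key i, key j]

lemma perron_const_C {N : ℕ} (M : Matrix (Fin N) (Fin N) ℝ)
    (hrow : ∀ i, ∑ j, M i j = 1)
    (m : ℕ) (hm : ∀ i j, 0 < (M ^ m) i j)
    (u : Fin N → ℂ) (hu : ∀ i, ∑ j, (M i j : ℂ) * u j = u i) (i j : Fin N) : u i = u j := by
  have hre : M *ᵥ (fun k => (u k).re) = fun k => (u k).re := by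
    funext k
    have := congrArg Complex.re (hu k)
    simpa [Matrix.mulVec, dotProduct, Complex.re_sum, Complex.mul_re] using this
  have him : M *ᵥ (fun k => (u k).im) = fun k => (u k).im := by
    funext k
    have := congrArg Complex.im (hu k)
    simpa [Matrix.mulVec, dotProduct, Complex.im_sum, Complex.mul_im] using this
  exact Complex.ext (perron_const M hrow m hm _ hre i j) (perron_const M hrow m hm _ him i j)

lemma gersh {N : ℕ} (M : Matrix (Fin N) (Fin N) ℝ)
    (hnn : ∀ i j, 0 ≤ M i j) (hrow : ∀ i, ∑ j, M i j = 1)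
    (μ : ℂ) (hμ : μ ≠ 0)
    (u : Fin N → ℂ) (hu : u ≠ 0) (heig : ∀ i, ∑ j, (M i j : ℂ) * u j = (μ + 1) * u i) :
    μ.re < 0 := by
  obtain ⟨k, hk⟩ := Function.ne_iff.mp hu
  obtain ⟨i, -, hmax⟩ := Finset.exists_max_image Finset.univ (fun l => ‖u l‖)
    ⟨k, Finset.mem_univ k⟩
  have hui : 0 < ‖u i‖ :=
    lt_of_lt_of_le (by simpa using hk) (hmax k (Finset.mem_univ k))
  set c : ℝ := M i i with hc
  have h1 : ((μ + 1) - (c : ℂ)) * u i = ∑ j ∈ Finset.univ.erase i, (M i j : ℂ) * u j := by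
    have h := heig i
    rw [← Finset.add_sum_erase _ _ (Finset.mem_univ i)] at h
    linear_combination -h
  have h2 : ‖((μ + 1) - (c : ℂ)) * u i‖ ≤ (1 - c) * ‖u i‖ := by
    rw [h1]
    calc ‖∑ j ∈ Finset.univ.erase i, (M i j : ℂ) * u j‖
        ≤ ∑ j ∈ Finset.univ.erase i, ‖(M i j : ℂ) * u j‖ :=
          norm_sum_le _ _
      _ ≤ ∑ j ∈ Finset.univ.erase i, M i j * ‖u i‖ := by
          refine Finset.sum_le_sum (fun j _ => ?_)
          rw [norm_mul, Complex.norm_of_nonneg (hnn i j)]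
          exact mul_le_mul_of_nonneg_left (hmax j (Finset.mem_univ j)) (hnn i j)
      _ = (1 - c) * ‖u i‖ := by
          rw [← Finset.sum_mul]
          congr 1
          have := hrow i
          rw [← Finset.add_sum_erase _ _ (Finset.mem_univ i)] at this
          linarith
  rw [norm_mul] at h2
  have h3 : ‖(μ + 1) - (c : ℂ)‖ ≤ 1 - c :=
    le_of_mul_le_mul_right (by linarith [h2]) hui
  set z : ℂ := (μ + 1) - (c : ℂ) with hz
  have hzre : z.re = μ.re + 1 - c := by simp [hz]
  have hzim : z.im = μ.im := by simp [hz]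
  have h4 : μ.re ≤ 0 := by
    have := Complex.re_le_norm z
    rw [hzre] at this
    linarith
  rcases lt_or_eq_of_le h4 with h | h
  · exact h
  · exfalso
    have h5 : ‖z‖ ^ 2 ≤ (1 - c) ^ 2 := by
      apply pow_le_pow_left₀ (norm_nonneg z) h3
    rw [Complex.sq_norm, Complex.normSq_apply, hzre, hzim, h] at h5
    have him : μ.im = 0 := by nlinarith
    exact hμ (Complex.ext (by simpa using h) (by simpa using him))

/-- If `Ã(q)` is irreducible then `0` is an eigenvalue of `C(q)`, the
`(N+1)d`-dimensional manifold `I = {(q', p) : p_1 = ⋯ = p_N}` is exactly the (generalized)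
eigenspace of the eigenvalue `0`, equal to the kernel of `C(q)²`, and every other eigenvalue
of `C(q)` has strictly negative real part. -/
theorem vicsekCMatrix_spectrum
    (d N : ℕ) (hN : 2 ≤ N) (hd : 1 ≤ d)
    (U : EuclideanSpace ℝ (Fin d) → ℝ)
    (hUsmooth : ContDiff ℝ (⊤ : ℕ∞) U)
    (hUsymm : ∀ x, U (-x) = U x)
    (hUnonneg : ∀ x, 0 ≤ U x) (hU0 : 0 < U 0)
    (q : Fin N → EuclideanSpace ℝ (Fin d))
    (hirr : MatrixIrreducible (vicsekMatrix d N U q)) :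
    -- `0` is an eigenvalue of `C(q)`
    (0 : ℂ) ∈ spectrum ℂ (vicsekCMatrix d N U q) ∧
    -- the kernel of `C(q)²` is exactly the manifold `I` (no constraint on the `q`-block,
    -- the `p`-block constant in the particle index)
    ({w : (Fin N × Fin d) ⊕ (Fin N × Fin d) → ℂ |
        (vicsekCMatrix d N U q * vicsekCMatrix d N U q).mulVec w = 0} =
      {w : (Fin N × Fin d) ⊕ (Fin N × Fin d) → ℂ |
        ∃ v : Fin d → ℂ, ∀ i a, w (Sum.inr (i, a)) = v a}) ∧
    -- every nonzero eigenvalue of `C(q)` has strictly negative real part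
    (∀ μ ∈ spectrum ℂ (vicsekCMatrix d N U q), μ ≠ 0 → μ.re < 0) := by
  have hNd : Nonempty (Fin N × Fin d) := ⟨(⟨0, by omega⟩, ⟨0, by omega⟩)⟩
  set M : Matrix (Fin N) (Fin N) ℝ := vicsekMatrix d N U q with hM
  set B : Matrix (Fin N × Fin d) (Fin N × Fin d) ℂ := vicsekBlockMatrix d N U q with hB
  set L : Matrix (Fin N × Fin d) (Fin N × Fin d) ℂ := B - 1 with hL
  have hCdef : vicsekCMatrix d N U q = Matrix.fromBlocks 0 1 0 L := rfl
  set C : Matrix ((Fin N × Fin d) ⊕ (Fin N × Fin d)) ((Fin N × Fin d) ⊕ (Fin N × Fin d)) ℂ :=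
    vicsekCMatrix d N U q with hC
  -- basic facts about M
  have hden : ∀ i, 0 < ∑ k, U (q i - q k) := by
    intro i
    refine Finset.sum_pos' (fun k _ => hUnonneg _) ⟨i, Finset.mem_univ i, ?_⟩
    simpa using hU0
  have hnn : ∀ i j, 0 ≤ M i j := fun i j => div_nonneg (hUnonneg _) (hden i).le
  have hrow : ∀ i, ∑ j, M i j = 1 := by
    intro i
    rw [hM]
    unfold vicsekMatrix
    rw [← Finset.sum_div, div_self (hden i).ne']
  have hrowC : ∀ i, ∑ j, (M i j : ℂ) = 1 := by
    intro i
    rw [← Complex.ofReal_sum, hrow i, Complex.ofReal_one]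
  have hBmul : ∀ (y : Fin N × Fin d → ℂ) (i : Fin N) (a : Fin d),
      (B *ᵥ y) (i, a) = ∑ j, (M i j : ℂ) * y (j, a) := by
    intro y i a
    rw [hB]
    unfold vicsekBlockMatrix
    rw [← hM]
    exact kronOne_mulVec (M.map Complex.ofReal) y i a
  obtain ⟨m, hm⟩ := hirr
  refine ⟨?_, ?_, ?_⟩
  -- Part 1: 0 is an eigenvalue
  · rw [spectrum.mem_iff]
    intro hu
    rw [map_zero, zero_sub] at hu
    have hu' : IsUnit C := by simpa using hu.neg
    rw [Matrix.isUnit_iff_isUnit_det, hCdef,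
      Matrix.det_fromBlocks_zero₂₁, Matrix.det_zero, zero_mul] at hu'
    exact hu'.ne_zero rfl
  -- Part 2: kernel of C²
  · have hC2 : C * C = Matrix.fromBlocks 0 L 0 (L * L) := by
      rw [hCdef, Matrix.fromBlocks_multiply]
      simp
    ext w
    simp only [Set.mem_setOf_eq]
    have hmv : (C * C) *ᵥ w =
        Sum.elim (L *ᵥ (w ∘ Sum.inr)) ((L * L) *ᵥ (w ∘ Sum.inr)) := by
      rw [hC2, Matrix.fromBlocks_mulVec]
      simp [Matrix.zero_mulVec]
    constructor
    · intro h
      rw [hmv] at h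
      have hLy : L *ᵥ (w ∘ Sum.inr) = 0 := by
        funext p
        exact congrFun h (Sum.inl p)
      have hBy : B *ᵥ (w ∘ Sum.inr) = w ∘ Sum.inr := by
        rw [hL, Matrix.sub_mulVec, Matrix.one_mulVec] at hLy
        exact sub_eq_zero.mp hLy
      refine ⟨fun a => w (Sum.inr (⟨0, by omega⟩, a)), fun i a => ?_⟩
      have heig : ∀ i', ∑ j, (M i' j : ℂ) * w (Sum.inr (j, a)) = w (Sum.inr (i', a)) := by
        intro i'
        have := congrFun hBy (i', a)
        rw [hBmul] at this
        exact this
      exact perron_const_C M hrow m hm (fun i' => w (Sum.inr (i', a))) heig i _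
    · rintro ⟨v, hv⟩
      have hLy : L *ᵥ (w ∘ Sum.inr) = 0 := by
        funext p
        obtain ⟨i, a⟩ := p
        rw [hL, Matrix.sub_mulVec, Matrix.one_mulVec]
        have : (B *ᵥ (w ∘ Sum.inr)) (i, a) = (w ∘ Sum.inr) (i, a) := by
          rw [hBmul]
          simp only [Function.comp_apply]
          calc ∑ j, (M i j : ℂ) * w (Sum.inr (j, a)) = ∑ j, (M i j : ℂ) * v a := by
                refine Finset.sum_congr rfl (fun j _ => by rw [hv j a])
            _ = (∑ j, (M i j : ℂ)) * v a := by rw [Finset.sum_mul]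
            _ = v a := by rw [hrowC, one_mul]
            _ = w (Sum.inr (i, a)) := (hv i a).symm
        simpa [this] using sub_eq_zero.mpr this
      rw [hmv, hLy]
      have : (L * L) *ᵥ (w ∘ Sum.inr) = 0 := by
        rw [← Matrix.mulVec_mulVec, hLy, Matrix.mulVec_zero]
      rw [this]
      funext p
      cases p <;> rfl
  -- Part 3: other eigenvalues have negative real part
  · intro μ hμspec hμ0
    rw [spectrum.mem_iff] at hμspec
    have hdet : (μ • (1 : Matrix ((Fin N × Fin d) ⊕ (Fin N × Fin d)) _ ℂ) - C).det = 0 := by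
      by_contra hne
      exact hμspec (by
        rw [Algebra.algebraMap_eq_smul_one]
        exact (Matrix.isUnit_iff_isUnit_det _).mpr (isUnit_iff_ne_zero.mpr hne))
    have hsplit : μ • (1 : Matrix ((Fin N × Fin d) ⊕ (Fin N × Fin d)) _ ℂ) - C =
        Matrix.fromBlocks (μ • 1) (-1) 0 (μ • 1 - L) := by
      rw [hCdef, ← Matrix.fromBlocks_one, Matrix.fromBlocks_smul, sub_eq_add_neg,
        Matrix.fromBlocks_neg, Matrix.fromBlocks_add]
      congr 1 <;> simp [sub_eq_add_neg]
    rw [hsplit, Matrix.det_fromBlocks_zero₂₁, Matrix.det_smul, Matrix.det_one, mul_one] at hdet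
    have hdet2 : (μ • (1 : Matrix (Fin N × Fin d) _ ℂ) - L).det = 0 := by
      rcases mul_eq_zero.mp hdet with h | h
      · exact absurd h (pow_ne_zero _ hμ0)
      · exact h
    have hrw : μ • (1 : Matrix (Fin N × Fin d) _ ℂ) - L = (μ + 1) • 1 - B := by
      rw [hL]; module
    rw [hrw] at hdet2
    obtain ⟨v, hv0, hveq⟩ := Matrix.exists_mulVec_eq_zero_iff.mpr hdet2
    have hBv : ∀ p, (B *ᵥ v) p = (μ + 1) * v p := by
      intro p
      rw [Matrix.sub_mulVec, Matrix.smul_mulVec, Matrix.one_mulVec] at hveq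
      have := congrFun (sub_eq_zero.mp hveq) p
      simpa [Pi.smul_apply, smul_eq_mul] using this.symm
    obtain ⟨⟨k, a⟩, hk⟩ := Function.ne_iff.mp hv0
    refine gersh M hnn hrow μ hμ0 (fun i => v (i, a)) ?_ ?_
    · intro h0
      exact hk (by simpa using congrFun h0 k)
    · intro i
      have := hBv (i, a)
      rw [hBmul] at this
      exact this
end

section
/- Let Ũ : ℝ^d → ℝ₊ be smooth with sup_{x∈ℝ^d} |∇ log Ũ(x)| ≤ K, and let U be its D-periodization U(x) = Σ_{n∈ℤ^d} Ũ(x + nD) on the torus T_D. For a probability measure ν on T_D × B₁ define A(x, ν) = (∫ U(x−y) u ν(dy,du)) / (∫ U(x−y) ν(dy,du)). Then each component of A(·, ν) is Lipschitz with constant L = 2K: |A^i(x, ν) − A^i(z, ν)| ≤ 2K|x − z| for all x, z ∈ T_D and i = 1,…,d. -/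
open MeasureTheory
open scoped BigOperators

section AuxMeanVel

variable {d : ℕ} {D K : ℝ} {Ut : EuclideanSpace ℝ (Fin d) → ℝ}

lemma auxMV_coord_le (u : EuclideanSpace ℝ (Fin d)) (i : Fin d) : |u i| ≤ ‖u‖ := by
  have h1 := EuclideanSpace.norm_eq u
  have h2 : |u i| = Real.sqrt (|u i| ^ 2) := by rw [Real.sqrt_sq_eq_abs, abs_abs]
  rw [h1, h2]
  apply Real.sqrt_le_sqrt
  have h3 : |u i| ^ 2 = ‖u i‖ ^ 2 := by rw [Real.norm_eq_abs]
  rw [h3]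
  exact Finset.single_le_sum (f := fun j => ‖u j‖ ^ 2) (fun j _ => sq_nonneg _)
    (Finset.mem_univ i)

lemma auxMV_ratio (hUtpos : ∀ x, 0 < Ut x) (hUtsmooth : ContDiff ℝ (⊤ : ℕ∞) Ut)
    (hK : ∀ x, ‖gradient (fun y => Real.log (Ut y)) x‖ ≤ K) :
    ∀ a b : EuclideanSpace ℝ (Fin d), Ut a ≤ Real.exp (K * ‖a - b‖) * Ut b := by
  have hdiff : ∀ y, DifferentiableAt ℝ (fun y => Real.log (Ut y)) y := fun y =>
    (Real.differentiableAt_log (hUtpos y).ne').comp y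
      ((hUtsmooth.differentiable (by simp)).differentiableAt)
  have hfd : ∀ y, ‖fderiv ℝ (fun y => Real.log (Ut y)) y‖ ≤ K := by
    intro y
    have h := hK y
    rwa [gradient, LinearIsometryEquiv.norm_map] at h
  intro a b
  have key := (convex_univ :
      Convex ℝ (Set.univ : Set (EuclideanSpace ℝ (Fin d)))).norm_image_sub_le_of_norm_fderiv_le
    (fun y _ => hdiff y) (fun y _ => hfd y) (Set.mem_univ b) (Set.mem_univ a)
  have h1 : Real.log (Ut a) - Real.log (Ut b) ≤ K * ‖a - b‖ :=
    le_trans (le_abs_self _) (by simpa [Real.norm_eq_abs] using key)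
  calc Ut a = Real.exp (Real.log (Ut a)) := (Real.exp_log (hUtpos a)).symm
    _ ≤ Real.exp (K * ‖a - b‖ + Real.log (Ut b)) := Real.exp_le_exp.2 (by linarith)
    _ = Real.exp (K * ‖a - b‖) * Ut b := by rw [Real.exp_add, Real.exp_log (hUtpos b)]

/-- One term of the periodization sum. -/
@[irreducible] noncomputable def auxMVtrm (D : ℝ) (Ut : EuclideanSpace ℝ (Fin d) → ℝ)
    (x : Fin d → ℝ) (n : Fin d → ℤ) : ℝ :=
  Ut ((EuclideanSpace.equiv (Fin d) ℝ).symm (fun i => x i + (n i : ℝ) * D))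

lemma auxMVtrm_def (x : Fin d → ℝ) (n : Fin d → ℤ) :
    auxMVtrm D Ut x n
      = Ut ((EuclideanSpace.equiv (Fin d) ℝ).symm (fun i => x i + (n i : ℝ) * D)) := by
  unfold auxMVtrm; rfl

lemma auxMVtrm_nonneg (hUtpos : ∀ x, 0 < Ut x) (x : Fin d → ℝ) (n : Fin d → ℤ) :
    0 ≤ auxMVtrm D Ut x n := by
  rw [auxMVtrm_def]; exact (hUtpos _).le

lemma auxMVtrm_shift (y : Fin d → ℝ) (m : Fin d → ℤ) :
    auxMVtrm D Ut (fun i => y i + (m i : ℝ) * D) = fun n => auxMVtrm D Ut y (n + m) := by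
  funext n
  unfold auxMVtrm
  congr 1
  congr 1
  funext i
  simp only [Pi.add_apply]
  push_cast
  ring

lemma auxMV_shift (x y : Fin d → ℝ) :
    ∃ m : Fin d → ℤ,
      ∀ n : Fin d → ℤ,
        ‖(EuclideanSpace.equiv (Fin d) ℝ).symm (fun i => x i + (n i : ℝ) * D) -
          (EuclideanSpace.equiv (Fin d) ℝ).symm
            (fun i => (y i + (m i : ℝ) * D) + (n i : ℝ) * D)‖
        = Real.sqrt (∑ j, dist ((x j : AddCircle D)) ((y j : AddCircle D)) ^ 2) := by
  refine ⟨fun j => round (D⁻¹ * (x j - y j)), fun n => ?_⟩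
  rw [← map_sub]
  have hv : (fun i => x i + (n i : ℝ) * D) -
      (fun i => (y i + (round (D⁻¹ * (x i - y i)) : ℝ) * D) + (n i : ℝ) * D)
      = fun i => (x i - y i) - (round (D⁻¹ * (x i - y i)) : ℝ) * D := by
    funext i; simp [Pi.sub_apply]; ring
  rw [hv, EuclideanSpace.norm_eq]
  congr 1
  refine Finset.sum_congr rfl fun j _ => ?_
  have hd : dist ((x j : AddCircle D)) ((y j : AddCircle D))
      = |(x j - y j) - (round (D⁻¹ * (x j - y j)) : ℝ) * D| := by
    rw [dist_eq_norm, ← AddCircle.coe_sub, AddCircle.norm_eq]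
  rw [hd, Real.norm_eq_abs]
  rfl

lemma auxMV_sum_transfer (hUtpos : ∀ x, 0 < Ut x) (hUtsmooth : ContDiff ℝ (⊤ : ℕ∞) Ut)
    (hK : ∀ x, ‖gradient (fun y => Real.log (Ut y)) x‖ ≤ K)
    (x y : Fin d → ℝ) (hy : Summable (auxMVtrm D Ut y)) : Summable (auxMVtrm D Ut x) := by
  obtain ⟨m, hm⟩ := auxMV_shift (D := D) x y
  set δ := Real.sqrt (∑ j, dist ((x j : AddCircle D)) ((y j : AddCircle D)) ^ 2)
  have hy' : Summable (auxMVtrm D Ut (fun i => y i + (m i : ℝ) * D)) := by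
    rw [auxMVtrm_shift]
    exact (Equiv.addRight m).summable_iff.2 hy
  refine Summable.of_nonneg_of_le (fun n => auxMVtrm_nonneg hUtpos x n) (fun n => ?_)
    (hy'.mul_left (Real.exp (K * δ)))
  rw [auxMVtrm_def, auxMVtrm_def]
  have := auxMV_ratio hUtpos hUtsmooth hK
    ((EuclideanSpace.equiv (Fin d) ℝ).symm (fun i => x i + (n i : ℝ) * D))
    ((EuclideanSpace.equiv (Fin d) ℝ).symm (fun i => (y i + (m i : ℝ) * D) + (n i : ℝ) * D))
  rw [hm n] at this
  exact this

lemma auxMV_F_le (hUtpos : ∀ x, 0 < Ut x) (hUtsmooth : ContDiff ℝ (⊤ : ℕ∞) Ut)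
    (hK : ∀ x, ‖gradient (fun y => Real.log (Ut y)) x‖ ≤ K)
    (x y : Fin d → ℝ) :
    ∑' n, auxMVtrm D Ut x n ≤
      Real.exp (K * Real.sqrt (∑ j, dist ((x j : AddCircle D)) ((y j : AddCircle D)) ^ 2)) *
        ∑' n, auxMVtrm D Ut y n := by
  set δ := Real.sqrt (∑ j, dist ((x j : AddCircle D)) ((y j : AddCircle D)) ^ 2) with hδ
  by_cases hy : Summable (auxMVtrm D Ut y)
  · obtain ⟨m, hm⟩ := auxMV_shift (D := D) x y
    have hy' : Summable (auxMVtrm D Ut (fun i => y i + (m i : ℝ) * D)) := by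
      rw [auxMVtrm_shift]; exact (Equiv.addRight m).summable_iff.2 hy
    have hx : Summable (auxMVtrm D Ut x) := auxMV_sum_transfer hUtpos hUtsmooth hK x y hy
    have hle : ∀ n, auxMVtrm D Ut x n
        ≤ Real.exp (K * δ) * auxMVtrm D Ut (fun i => y i + (m i : ℝ) * D) n := by
      intro n
      have := auxMV_ratio hUtpos hUtsmooth hK
        ((EuclideanSpace.equiv (Fin d) ℝ).symm (fun i => x i + (n i : ℝ) * D))
        ((EuclideanSpace.equiv (Fin d) ℝ).symm (fun i => (y i + (m i : ℝ) * D) + (n i : ℝ) * D))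
      rw [hm n] at this
      rw [auxMVtrm_def, auxMVtrm_def]
      exact this
    calc ∑' n, auxMVtrm D Ut x n
        ≤ ∑' n, Real.exp (K * δ) * auxMVtrm D Ut (fun i => y i + (m i : ℝ) * D) n :=
          Summable.tsum_le_tsum hle hx (hy'.mul_left _)
      _ = Real.exp (K * δ) * ∑' n, auxMVtrm D Ut (fun i => y i + (m i : ℝ) * D) n := tsum_mul_left
      _ = Real.exp (K * δ) * ∑' n, auxMVtrm D Ut y n := by
          rw [auxMVtrm_shift]
          congr 1
          exact (Equiv.addRight m).tsum_eq (auxMVtrm D Ut y)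
  · have hx : ¬ Summable (auxMVtrm D Ut x) := fun hx =>
      hy (auxMV_sum_transfer hUtpos hUtsmooth hK y x hx)
    rw [tsum_eq_zero_of_not_summable hy, tsum_eq_zero_of_not_summable hx]
    simp

/-- A measurable choice of representatives. -/
noncomputable def auxMVlft (D : ℝ) [Fact (0 < D)] (p : Fin d → AddCircle D) : Fin d → ℝ :=
  fun i => (AddCircle.equivIoc D 0 (p i) : ℝ)

lemma auxMVlft_coe (D : ℝ) [Fact (0 < D)] (p : Fin d → AddCircle D) (i : Fin d) :
    ((auxMVlft D p i : ℝ) : AddCircle D) = p i := by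
  change (AddCircle.equivIoc D 0).symm (AddCircle.equivIoc D 0 (p i)) = p i
  exact (AddCircle.equivIoc D 0).symm_apply_apply (p i)

lemma auxMVlft_meas (D : ℝ) [Fact (0 < D)] :
    Measurable (auxMVlft D : (Fin d → AddCircle D) → (Fin d → ℝ)) :=
  measurable_pi_lambda _ fun i =>
    (measurable_subtype_coe.comp (AddCircle.measurableEquivIoc D 0).measurable).comp
      (measurable_pi_apply i)

end AuxMeanVel

section Core
variable {Ω : Type*} [MeasurableSpace Ω]

lemma auxMV_min (ν : Measure Ω) [IsProbabilityMeasure ν]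
    (f g : Ω → ℝ) (R c₁ c₂ : ℝ) (hR : 1 ≤ R) (hc₁ : 0 < c₁)
    (hfm : Measurable f) (hgm : Measurable g)
    (hf1 : ∀ w, c₁ ≤ f w) (hf2 : ∀ w, f w ≤ c₂)
    (hg1 : ∀ w, c₁ ≤ g w) (hg2 : ∀ w, g w ≤ c₂)
    (hgf : ∀ w, g w ≤ R * f w)
    (hab : (∫ w, f w ∂ν) ≤ ∫ w, g w ∂ν) :
    R⁻¹ ≤ ∫ w, min (f w / ∫ w, f w ∂ν) (g w / ∫ w, g w ∂ν) ∂ν := by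
  have hRpos : 0 < R := lt_of_lt_of_le one_pos hR
  set a := ∫ w, f w ∂ν with ha
  set b := ∫ w, g w ∂ν with hb
  have hfint : Integrable f ν := by
    refine Integrable.mono' (integrable_const c₂) hfm.aestronglyMeasurable ?_
    refine Filter.Eventually.of_forall fun w => ?_
    rw [Real.norm_eq_abs, abs_of_pos (lt_of_lt_of_le hc₁ (hf1 w))]
    exact hf2 w
  have hgint : Integrable g ν := by
    refine Integrable.mono' (integrable_const c₂) hgm.aestronglyMeasurable ?_
    refine Filter.Eventually.of_forall fun w => ?_
    rw [Real.norm_eq_abs, abs_of_pos (lt_of_lt_of_le hc₁ (hg1 w))]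
    exact hg2 w
  have hconst : ∫ (_ : Ω), c₁ ∂ν = c₁ := by simp
  have hapos : 0 < a :=
    lt_of_lt_of_le hc₁ (hconst ▸ integral_mono (integrable_const c₁) hfint fun w => hf1 w)
  have hbpos : 0 < b := lt_of_lt_of_le hapos hab
  have hmin_meas : Measurable fun w => min (f w / a) (g w / b) :=
    (hfm.div_const a).min (hgm.div_const b)
  have hmin_int : Integrable (fun w => min (f w / a) (g w / b)) ν := by
    refine Integrable.mono' (integrable_const (c₂ / a)) hmin_meas.aestronglyMeasurable ?_
    refine Filter.Eventually.of_forall fun w => ?_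
    rw [Real.norm_eq_abs, abs_of_pos (lt_min (div_pos (lt_of_lt_of_le hc₁ (hf1 w)) hapos)
      (div_pos (lt_of_lt_of_le hc₁ (hg1 w)) hbpos))]
    exact le_trans (min_le_left _ _) (by gcongr; exact hf2 w)
  have hpt : ∀ w, R⁻¹ * (g w / b) ≤ min (f w / a) (g w / b) := by
    intro w
    have hg0 : 0 ≤ g w := le_trans hc₁.le (hg1 w)
    have hf0 : 0 ≤ f w := le_trans hc₁.le (hf1 w)
    refine le_min ?_ ?_
    · have h1 : R⁻¹ * g w ≤ f w := by
        rw [inv_mul_le_iff₀ hRpos]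
        exact hgf w
      calc R⁻¹ * (g w / b) = (R⁻¹ * g w) / b := by ring
        _ ≤ f w / b := by gcongr
        _ ≤ f w / a := by gcongr
    · have h1 : R⁻¹ ≤ 1 := inv_le_one_of_one_le₀ hR
      nlinarith [div_nonneg hg0 hbpos.le]
  calc R⁻¹ = R⁻¹ * (b / b) := by rw [div_self hbpos.ne']; ring
    _ = ∫ w, R⁻¹ * (g w / b) ∂ν := by
        rw [integral_const_mul, integral_div]
    _ ≤ _ := integral_mono ((hgint.div_const b).const_mul _) hmin_int hpt

lemma auxMV_core (ν : Measure Ω) [IsProbabilityMeasure ν]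
    (f g u : Ω → ℝ) (R c₁ c₂ : ℝ) (hR : 1 ≤ R) (hc₁ : 0 < c₁) (hc12 : c₁ ≤ c₂)
    (hfm : Measurable f) (hgm : Measurable g) (hum : Measurable u)
    (hf1 : ∀ w, c₁ ≤ f w) (hf2 : ∀ w, f w ≤ c₂)
    (hg1 : ∀ w, c₁ ≤ g w) (hg2 : ∀ w, g w ≤ c₂)
    (hfg : ∀ w, f w ≤ R * g w) (hgf : ∀ w, g w ≤ R * f w)
    (hub : ∀ᵐ w ∂ν, |u w| ≤ 1) :
    |(∫ w, f w * u w ∂ν) / (∫ w, f w ∂ν) - (∫ w, g w * u w ∂ν) / (∫ w, g w ∂ν)| ≤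
      2 * (1 - R⁻¹) := by
  have hRpos : 0 < R := lt_of_lt_of_le one_pos hR
  have hc₂ : 0 < c₂ := lt_of_lt_of_le hc₁ hc12
  set a := ∫ w, f w ∂ν with ha
  set b := ∫ w, g w ∂ν with hb
  have hfpos : ∀ w, 0 < f w := fun w => lt_of_lt_of_le hc₁ (hf1 w)
  have hgpos : ∀ w, 0 < g w := fun w => lt_of_lt_of_le hc₁ (hg1 w)
  have hfint : Integrable f ν := by
    refine Integrable.mono' (integrable_const c₂) hfm.aestronglyMeasurable ?_
    exact Filter.Eventually.of_forall fun w => by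
      rw [Real.norm_eq_abs, abs_of_pos (hfpos w)]; exact hf2 w
  have hgint : Integrable g ν := by
    refine Integrable.mono' (integrable_const c₂) hgm.aestronglyMeasurable ?_
    exact Filter.Eventually.of_forall fun w => by
      rw [Real.norm_eq_abs, abs_of_pos (hgpos w)]; exact hg2 w
  have hconst : ∫ (_ : Ω), c₁ ∂ν = c₁ := by simp
  have hapos : 0 < a :=
    lt_of_lt_of_le hc₁ (hconst ▸ integral_mono (integrable_const c₁) hfint fun w => hf1 w)
  have hbpos : 0 < b :=
    lt_of_lt_of_le hc₁ (hconst ▸ integral_mono (integrable_const c₁) hgint fun w => hg1 w)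
  have hfuint : Integrable (fun w => f w * u w) ν := by
    refine Integrable.mono' (integrable_const (c₂ * 1)) (hfm.mul hum).aestronglyMeasurable ?_
    filter_upwards [hub] with w hw
    rw [Real.norm_eq_abs, abs_mul, abs_of_pos (hfpos w)]
    exact mul_le_mul (hf2 w) hw (abs_nonneg _) hc₂.le
  have hguint : Integrable (fun w => g w * u w) ν := by
    refine Integrable.mono' (integrable_const (c₂ * 1)) (hgm.mul hum).aestronglyMeasurable ?_
    filter_upwards [hub] with w hw
    rw [Real.norm_eq_abs, abs_mul, abs_of_pos (hgpos w)]
    exact mul_le_mul (hg2 w) hw (abs_nonneg _) hc₂.le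
  set h : Ω → ℝ := fun w => f w / a - g w / b with hh
  have hhmeas : Measurable h := (hfm.div_const a).sub (hgm.div_const b)
  have hhint : Integrable h ν := (hfint.div_const a).sub (hgint.div_const b)
  have hhabs : ∀ w, |h w| ≤ c₂ / a + c₂ / b := by
    intro w
    refine le_trans (abs_sub _ _) ?_
    rw [abs_of_pos (div_pos (hfpos w) hapos), abs_of_pos (div_pos (hgpos w) hbpos)]
    exact add_le_add (by gcongr; exact hf2 w) (by gcongr; exact hg2 w)
  have hhuint : Integrable (fun w => h w * u w) ν := by
    refine Integrable.mono' (integrable_const ((c₂ / a + c₂ / b) * 1))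
      (hhmeas.mul hum).aestronglyMeasurable ?_
    filter_upwards [hub] with w hw
    rw [Real.norm_eq_abs, abs_mul]
    exact mul_le_mul (hhabs w) hw (abs_nonneg _)
      (add_nonneg (div_nonneg hc₂.le hapos.le) (div_nonneg hc₂.le hbpos.le))
  have hmin_meas : Measurable fun w => min (f w / a) (g w / b) :=
    (hfm.div_const a).min (hgm.div_const b)
  have hmin_int : Integrable (fun w => min (f w / a) (g w / b)) ν := by
    refine Integrable.mono' (integrable_const (c₂ / a)) hmin_meas.aestronglyMeasurable ?_
    refine Filter.Eventually.of_forall fun w => ?_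
    rw [Real.norm_eq_abs, abs_of_pos (lt_min (div_pos (hfpos w) hapos) (div_pos (hgpos w) hbpos))]
    exact le_trans (min_le_left _ _) (by gcongr; exact hf2 w)
  have hminlb : R⁻¹ ≤ ∫ w, min (f w / a) (g w / b) ∂ν := by
    rcases le_total a b with hab | hab
    · exact auxMV_min ν f g R c₁ c₂ hR hc₁ hfm hgm hf1 hf2 hg1 hg2 hgf hab
    · have := auxMV_min ν g f R c₁ c₂ hR hc₁ hgm hfm hg1 hg2 hf1 hf2 hfg hab
      simpa [min_comm] using this
  have habs : ∀ w, |h w| = f w / a + g w / b - 2 * min (f w / a) (g w / b) := by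
    intro w
    rcases le_total (f w / a) (g w / b) with hc | hc
    · rw [min_eq_left hc]
      rw [show h w = f w / a - g w / b from rfl, abs_of_nonpos (sub_nonpos.2 hc)]
      ring
    · rw [min_eq_right hc]
      rw [show h w = f w / a - g w / b from rfl, abs_of_nonneg (sub_nonneg.2 hc)]
      ring
  have hintabs : ∫ w, |h w| ∂ν ≤ 2 * (1 - R⁻¹) := by
    have i1 : Integrable (fun w => f w / a + g w / b) ν :=
      (hfint.div_const a).add (hgint.div_const b)
    have i2 : Integrable (fun w => 2 * min (f w / a) (g w / b)) ν := hmin_int.const_mul 2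
    have e1 : ∫ w, |h w| ∂ν = a / a + b / b - 2 * ∫ w, min (f w / a) (g w / b) ∂ν := by
      calc ∫ w, |h w| ∂ν
          = ∫ w, (f w / a + g w / b - 2 * min (f w / a) (g w / b)) ∂ν := by
            simp only [habs]
        _ = (∫ w, (f w / a + g w / b) ∂ν) - ∫ w, 2 * min (f w / a) (g w / b) ∂ν :=
            integral_sub i1 i2
        _ = ((∫ w, f w / a ∂ν) + ∫ w, g w / b ∂ν) - 2 * ∫ w, min (f w / a) (g w / b) ∂ν := by
            rw [integral_add (hfint.div_const a) (hgint.div_const b), integral_const_mul]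
        _ = a / a + b / b - 2 * ∫ w, min (f w / a) (g w / b) ∂ν := by
            rw [integral_div, integral_div]
    rw [e1, div_self hapos.ne', div_self hbpos.ne']
    linarith [hminlb]
  have hsplit : (∫ w, f w * u w ∂ν) / a - (∫ w, g w * u w ∂ν) / b = ∫ w, h w * u w ∂ν := by
    rw [← integral_div, ← integral_div,
      ← integral_sub (hfuint.div_const a) (hguint.div_const b)]
    congr 1
    funext w
    show f w * u w / a - g w * u w / b = (f w / a - g w / b) * u w
    ring
  rw [hsplit]
  calc |∫ w, h w * u w ∂ν| ≤ ∫ w, |h w * u w| ∂ν := by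
        have := norm_integral_le_integral_norm (fun w => h w * u w) (μ := ν)
        simpa only [Real.norm_eq_abs] using this
    _ ≤ ∫ w, |h w| ∂ν := by
        refine integral_mono_ae hhuint.abs hhint.abs ?_
        filter_upwards [hub] with w hw
        rw [abs_mul]
        calc |h w| * |u w| ≤ |h w| * 1 := mul_le_mul_of_nonneg_left hw (abs_nonneg _)
          _ = |h w| := mul_one _
    _ ≤ 2 * (1 - R⁻¹) := hintabs
end Core

/-- Let `Ũ : ℝ^d → ℝ₊` be smooth with `sup_x |∇ log Ũ(x)| ≤ K` and let `U`
be its `D`-periodization on the torus `T_D = (ℝ/Dℤ)^d`.  For a probability measure `ν` on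
`T_D × B₁`, the local mean velocity `A(x, ν) = (∫ U(x−y) u ν(dy,du)) / (∫ U(x−y) ν(dy,du))`
is componentwise Lipschitz with constant `L = 2K` (for the Euclidean distance on the torus). -/
theorem meanVelocity_lipschitz_of_log_gradient_bound
    (d : ℕ) (D K : ℝ) (hD : 0 < D)
    (Ut : EuclideanSpace ℝ (Fin d) → ℝ)
    (hUtpos : ∀ x, 0 < Ut x)
    (hUtsmooth : ContDiff ℝ (⊤ : ℕ∞) Ut)
    (hK : ∀ x, ‖gradient (fun y => Real.log (Ut y)) x‖ ≤ K)
    (U : (Fin d → AddCircle D) → ℝ)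
    -- `U` is the `D`-periodization of `Ũ`, viewed as a function on the torus
    (hU : ∀ x : Fin d → ℝ,
      U (fun i => (x i : AddCircle D)) =
        ∑' n : Fin d → ℤ,
          Ut ((EuclideanSpace.equiv (Fin d) ℝ).symm (fun i => x i + (n i : ℝ) * D)))
    (ν : Measure ((Fin d → AddCircle D) × EuclideanSpace ℝ (Fin d)))
    [IsProbabilityMeasure ν]
    (hsupp : ν {w | w.2 ∉ Metric.closedBall (0 : EuclideanSpace ℝ (Fin d)) 1} = 0) :
    ∀ (x z : Fin d → AddCircle D) (i : Fin d),
      |(∫ w, U (x - w.1) * w.2 i ∂ν) / (∫ w, U (x - w.1) ∂ν) -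
        (∫ w, U (z - w.1) * w.2 i ∂ν) / (∫ w, U (z - w.1) ∂ν)| ≤
      (2 * K) * Real.sqrt (∑ j, dist (x j) (z j) ^ 2) := by
  intro x z i
  haveI := Fact.mk hD
  have hK0 : 0 ≤ K := le_trans (norm_nonneg _) (hK 0)
  set δ := Real.sqrt (∑ j, dist (x j) (z j) ^ 2) with hδdef
  have hδ0 : 0 ≤ δ := Real.sqrt_nonneg _
  -- rewrite U via the lifted periodization sum
  have hU' : ∀ p : Fin d → AddCircle D, U p = ∑' n, auxMVtrm D Ut (auxMVlft D p) n := by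
    intro p
    have h1 : (fun i => ((auxMVlft D p i : ℝ) : AddCircle D)) = p := funext (auxMVlft_coe D p)
    have h2 := hU (auxMVlft D p)
    rw [h1] at h2
    rw [h2]
    exact tsum_congr fun n => (auxMVtrm_def _ _).symm
  by_cases hS : Summable (auxMVtrm D Ut (auxMVlft D (0 : Fin d → AddCircle D)))
  case neg =>
    have hU0 : ∀ p, U p = 0 := by
      intro p
      rw [hU' p]
      apply tsum_eq_zero_of_not_summable
      intro hc
      exact hS (auxMV_sum_transfer hUtpos hUtsmooth hK _ _ hc)
    simp only [hU0, zero_mul, integral_zero, zero_div, sub_zero, abs_zero]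
    exact mul_nonneg (by linarith) hδ0
  case pos =>
  have hSall : ∀ p : Fin d → AddCircle D, Summable (auxMVtrm D Ut (auxMVlft D p)) :=
    fun p => auxMV_sum_transfer hUtpos hUtsmooth hK _ _ hS
  have hUratio : ∀ p q : Fin d → AddCircle D,
      U p ≤ Real.exp (K * Real.sqrt (∑ j, dist (p j) (q j) ^ 2)) * U q := by
    intro p q
    rw [hU' p, hU' q]
    have := auxMV_F_le (D := D) hUtpos hUtsmooth hK (auxMVlft D p) (auxMVlft D q)
    simpa only [auxMVlft_coe] using this
  have hUpos : ∀ p, 0 < U p := by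
    intro p
    rw [hU' p]
    exact Summable.tsum_pos (hSall p) (fun n => auxMVtrm_nonneg hUtpos _ n) 0
      (by rw [auxMVtrm_def]; exact hUtpos _)
  -- global distance bound on the torus
  set CC := Real.sqrt (∑ _j : Fin d, (D / 2) ^ 2) with hCC
  have hδle : ∀ p q : Fin d → AddCircle D,
      Real.sqrt (∑ j, dist (p j) (q j) ^ 2) ≤ CC := by
    intro p q
    apply Real.sqrt_le_sqrt
    apply Finset.sum_le_sum
    intro j _
    have h1 : dist (p j) (q j) ≤ D / 2 := by
      have h2 := AddCircle.norm_le_half_period (p := D) (x := p j - q j) hD.ne'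
      rw [dist_eq_norm]
      calc ‖p j - q j‖ ≤ |D| / 2 := h2
        _ = D / 2 := by rw [abs_of_pos hD]
    exact pow_le_pow_left₀ dist_nonneg h1 2
  have hCC0 : 0 ≤ CC := Real.sqrt_nonneg _
  set c₁ := Real.exp (-(K * CC)) * U 0 with hc₁def
  set c₂ := Real.exp (K * CC) * U 0 with hc₂def
  have hc₁pos : 0 < c₁ := mul_pos (Real.exp_pos _) (hUpos 0)
  have hc12 : c₁ ≤ c₂ := by
    apply mul_le_mul_of_nonneg_right _ (hUpos 0).le
    apply Real.exp_le_exp.2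
    nlinarith [mul_nonneg hK0 hCC0]
  have hUle : ∀ p, U p ≤ c₂ := by
    intro p
    refine le_trans (hUratio p 0) ?_
    apply mul_le_mul_of_nonneg_right _ (hUpos 0).le
    exact Real.exp_le_exp.2 (mul_le_mul_of_nonneg_left (hδle p 0) hK0)
  have hUge : ∀ p, c₁ ≤ U p := by
    intro p
    have h3 : U 0 ≤ Real.exp (K * CC) * U p :=
      le_trans (hUratio 0 p)
        (mul_le_mul_of_nonneg_right
          (Real.exp_le_exp.2 (mul_le_mul_of_nonneg_left (hδle 0 p) hK0)) (hUpos p).le)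
    calc c₁ = Real.exp (-(K * CC)) * U 0 := hc₁def
      _ ≤ Real.exp (-(K * CC)) * (Real.exp (K * CC) * U p) :=
          mul_le_mul_of_nonneg_left h3 (Real.exp_pos _).le
      _ = U p := by rw [← mul_assoc, ← Real.exp_add]; simp
  -- measurability of U
  have hUmeas : Measurable U := by
    have hrepr : U = fun p =>
        (∑' n : Fin d → ℤ, ENNReal.ofReal (auxMVtrm D Ut (auxMVlft D p) n)).toReal := by
      funext p
      rw [hU' p, ← ENNReal.ofReal_tsum_of_nonneg (fun n => auxMVtrm_nonneg hUtpos _ n) (hSall p),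
        ENNReal.toReal_ofReal (tsum_nonneg (fun n => auxMVtrm_nonneg hUtpos _ n))]
    rw [hrepr]
    apply Measurable.ennreal_toReal
    apply Measurable.ennreal_tsum
    intro n
    apply Measurable.ennreal_ofReal
    have h4 : (fun p => auxMVtrm D Ut (auxMVlft D p) n)
        = fun p => Ut ((EuclideanSpace.equiv (Fin d) ℝ).symm
            (fun i => auxMVlft D p i + (n i : ℝ) * D)) := funext fun p => auxMVtrm_def _ _
    rw [h4]
    apply (hUtsmooth.continuous.measurable).comp
    apply ((EuclideanSpace.equiv (Fin d) ℝ).symm.continuous.measurable).comp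
    exact measurable_pi_lambda _ fun i =>
      (((measurable_pi_apply i).comp (auxMVlft_meas D)).add_const _)
  -- pointwise ratio for the shifted kernels
  have hfg : ∀ w : (Fin d → AddCircle D) × EuclideanSpace ℝ (Fin d),
      U (x - w.1) ≤ Real.exp (K * δ) * U (z - w.1) := by
    intro w
    have h5 := hUratio (x - w.1) (z - w.1)
    have hdist : (∑ j, dist ((x - w.1) j) ((z - w.1) j) ^ 2) = ∑ j, dist (x j) (z j) ^ 2 := by
      refine Finset.sum_congr rfl fun j _ => ?_
      rw [Pi.sub_apply, Pi.sub_apply, dist_sub_right]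
    rw [hdist] at h5
    exact h5
  have hgf : ∀ w : (Fin d → AddCircle D) × EuclideanSpace ℝ (Fin d),
      U (z - w.1) ≤ Real.exp (K * δ) * U (x - w.1) := by
    intro w
    have h5 := hUratio (z - w.1) (x - w.1)
    have hdist : (∑ j, dist ((z - w.1) j) ((x - w.1) j) ^ 2) = ∑ j, dist (x j) (z j) ^ 2 := by
      refine Finset.sum_congr rfl fun j _ => ?_
      rw [Pi.sub_apply, Pi.sub_apply, dist_sub_right, dist_comm]
    rw [hdist] at h5
    exact h5
  -- a.e. bound on the velocity coordinate
  have hub : ∀ᵐ w ∂ν, |w.2 i| ≤ 1 := by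
    have h0 : ∀ᵐ w ∂ν, w.2 ∈ Metric.closedBall (0 : EuclideanSpace ℝ (Fin d)) 1 := by
      rw [MeasureTheory.ae_iff]
      exact hsupp
    filter_upwards [h0] with w hw
    have h6 : ‖w.2‖ ≤ 1 := by
      simpa [Metric.mem_closedBall, dist_zero_right] using hw
    exact le_trans (auxMV_coord_le w.2 i) h6
  -- apply the core estimate
  have hcore := auxMV_core ν (fun w => U (x - w.1)) (fun w => U (z - w.1)) (fun w => w.2 i)
    (Real.exp (K * δ)) c₁ c₂
    (Real.one_le_exp (mul_nonneg hK0 hδ0))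
    hc₁pos hc12
    (hUmeas.comp (measurable_fst.const_sub x))
    (hUmeas.comp (measurable_fst.const_sub z))
    ((measurable_pi_apply i).comp ((WithLp.measurable_ofLp _ _).comp measurable_snd))
    (fun w => hUge _) (fun w => hUle _) (fun w => hUge _) (fun w => hUle _)
    hfg hgf hub
  refine le_trans hcore ?_
  -- 2 (1 - e^{-Kδ}) ≤ 2 K δ
  rw [← Real.exp_neg]
  have h7 : 1 - (K * δ) ≤ Real.exp (-(K * δ)) := by
    have := Real.add_one_le_exp (-(K * δ))
    linarith
  nlinarith [Real.exp_pos (-(K * δ))]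
end
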